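/- arXiv:2303.04860 — 2 statements merged into one kernel-verified Lean document; each statement's English description precedes it below -/
import Mathlib

section
/- Let Z be a compact metrizable abelian topological group whose Pontryagin dual is divisible, let A be a countable discrete divisible abelian group, and let k ≥ 1. Then the abelian group ML_k(Z,A) of continuous multilinear maps from Z^k to A is countable and divisible. -/
/-!
A continuous map from a compact space to a discrete one is locally constant, and when the
domain is also second countable the space `C(X, A)` is both second countable and discrete,
hence countable.

Continuity into a discrete group is phrased as `IsLocallyConstant`, which needs no topology
on the target. Divisibility then goes by induction on `k`: currying the last variable turns
`b ∈ ML_{k+1}(Z, A)` into an element of `ML_k(Z, H)`, where `H` is the group of locally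
constant homomorphisms `Z → A` (compactness of `Z` keeps the curried map locally constant),
so it suffices that `H` is divisible. A locally constant `χ : Z → A` has finite image, which
splits into cyclic groups `ZMod d`. Through `ZMod d ↪ ℝ/ℤ` a homomorphism `ξ : Z → ZMod d`
is a character; an `n`-th root of it is `n d`-torsion, hence a lift of `ξ` to `ZMod (n d)`,
and there `χ` is divided using an `n`-th root in `A` of the image of `1 : ZMod d`.
-/

/-- `b : Z^k → A` is multilinear if it is a group homomorphism in each coordinate. -/
def IsMultilinear {Z A : Type*} [AddCommGroup Z] [AddCommGroup A] {k : ℕ}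
    (b : (Fin k → Z) → A) : Prop :=
  ∀ (i : Fin k) (g : Fin k → Z) (x y : Z),
    b (Function.update g i (x + y)) = b (Function.update g i x) + b (Function.update g i y)

open Set Function TopologicalSpace Filter Topology

section LocallyConstant

variable {X Y A : Type*} [TopologicalSpace X] [TopologicalSpace Y]

theorem IsLocallyConstant.curry_of_compactSpace [CompactSpace Y] {f : X × Y → A}
    (hf : IsLocallyConstant f) : IsLocallyConstant (curry f) := by
  refine (IsLocallyConstant.iff_eventually_eq _).2 fun x₀ => ?_
  have hnear (y : Y) : ∀ᶠ p in 𝓝 (x₀, y), f p = f (x₀, p.2) := by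
    filter_upwards [hf.eventually_eq (x₀, y), ((continuous_const.prodMk continuous_snd).tendsto
      (x₀, y)).eventually (hf.eventually_eq (x₀, y))] with p h₁ h₂
    exact h₁.trans h₂.symm
  filter_upwards [isCompact_univ.eventually_forall_of_forall_eventually
    (P := fun x y => f (x, y) = f (x₀, y)) fun y _ => hnear y] with x hx
  exact funext fun y => hx y (mem_univ y)

theorem IsLocallyConstant.uncurry {F : X → Y → A} (hF : IsLocallyConstant F)
    (hFx : ∀ x, IsLocallyConstant (F x)) : IsLocallyConstant (uncurry F) := by
  refine (IsLocallyConstant.iff_eventually_eq _).2 fun p => ?_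
  filter_upwards [continuous_fst.continuousAt.eventually (hF.eventually_eq p.1),
    continuous_snd.continuousAt.eventually ((hFx p.1).eventually_eq p.2)] with q hq₁ hq₂
  simp only [Function.uncurry, hq₁, hq₂]

instance ContinuousMap.discreteTopology_of_compactSpace [CompactSpace X] [DiscreteTopology Y] :
    DiscreteTopology C(X, Y) := by
  refine discreteTopology_iff_isOpen_singleton.2 fun f => ?_
  have hfin : (range f).Finite := (isCompact_range f.continuous).finite_of_discrete
  convert hfin.isOpen_biInter fun a _ => ContinuousMap.isOpen_setOfPred_mapsTo
    ((isClosed_discrete {a}).preimage f.continuous).isCompact (isOpen_discrete {a})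
  ext g
  simp only [mem_singleton_iff, mem_iInter, mem_ofPred_eq, MapsTo, mem_preimage,
    ContinuousMap.ext_iff]
  exact ⟨fun h _ _ x hx => (h x).trans hx, fun h x => h _ (mem_range_self x) rfl⟩

theorem ContinuousMap.countable_of_compactSpace [CompactSpace X] [LocallyCompactSpace X]
    [SecondCountableTopology X] [DiscreteTopology Y] [Countable Y] : Countable C(X, Y) :=
  countable_of_Lindelof_of_discrete

end LocallyConstant

theorem IsLocallyConstant.of_continuous_injective_comp {X Y W : Type*} [TopologicalSpace X]
    [TopologicalSpace W] [T1Space W] [Finite Y] {f : X → Y} {g : Y → W} (hg : Injective g)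
    (hgf : Continuous (g ∘ f)) : IsLocallyConstant f := fun s => by
  have hclosed (t : Set Y) : IsClosed (f ⁻¹' t) := by
    rw [← preimage_image_eq t hg, ← preimage_comp]
    exact (t.toFinite.image g).isClosed.preimage hgf
  simpa using (hclosed sᶜ).isOpen_compl

namespace ZMod

theorem exists_toAddCircle_eq_of_nsmul_eq_zero {N : ℕ} [NeZero N] {u : UnitAddCircle}
    (hu : N • u = 0) : ∃ j : ZMod N, toAddCircle j = u := by
  obtain ⟨m, -, rfl⟩ := (AddCircle.nsmul_eq_zero_iff (NeZero.pos N)).1 hu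
  exact ⟨m, by rw [toAddCircle_natCast, mul_one]⟩

theorem toAddCircle_castHom_mul {n d : ℕ} [NeZero n] [NeZero d] (x : ZMod (n * d)) :
    toAddCircle (castHom (dvd_mul_left d n) (ZMod d) x) = n • toAddCircle x := by
  obtain ⟨j, rfl⟩ := intCast_surjective x
  rw [map_intCast, toAddCircle_intCast, toAddCircle_intCast, ← AddCircle.coe_nsmul, nsmul_eq_mul]
  congr 1
  have hn : (n : ℝ) ≠ 0 := NeZero.ne _
  push_cast
  field_simp

end ZMod

def IsDivisible (A : Type*) [AddCommGroup A] : Prop :=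
  ∀ (a : A) (n : ℕ), 1 ≤ n → ∃ a' : A, n • a' = a

def HasDivisibleDual (Z : Type*) [AddCommGroup Z] [TopologicalSpace Z] : Prop :=
  ∀ χ : Z →+ AddCircle (1 : ℝ), Continuous χ → ∀ n : ℕ, 1 ≤ n →
    ∃ χ' : Z →+ AddCircle (1 : ℝ), Continuous χ' ∧ n • χ' = χ

def locallyConstantAddHoms (Z A : Type*) [AddCommGroup Z] [TopologicalSpace Z]
    [AddCommGroup A] : AddSubgroup (Z →+ A) where
  carrier := {χ | IsLocallyConstant χ}
  add_mem' hχ hψ := hχ.add hψ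
  zero_mem' := IsLocallyConstant.zero
  neg_mem' hχ := hχ.neg

section Characters

variable {Z A : Type*} [AddCommGroup Z] [TopologicalSpace Z] [AddCommGroup A]

open ZMod in
theorem HasDivisibleDual.exists_lift_zmod (hZ : HasDivisibleDual Z) {n d : ℕ} [NeZero n]
    [NeZero d] (ξ : Z →+ ZMod d) (hξ : IsLocallyConstant ξ) :
    ∃ η : Z →+ ZMod (n * d), IsLocallyConstant η ∧
      (castHom (dvd_mul_left d n) (ZMod d)).toAddMonoidHom.comp η = ξ := by
  obtain ⟨ψ, hψc, hψ⟩ :=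
    hZ (toAddCircle.comp ξ) (hξ.comp toAddCircle).continuous n NeZero.one_le
  have hnψ (z : Z) : n • ψ z = toAddCircle (ξ z) := DFunLike.congr_fun hψ z
  have htorsion (z : Z) : (n * d) • ψ z = 0 := by
    rw [mul_nsmul, hnψ, ← map_nsmul, nsmul_eq_mul, natCast_self, zero_mul, map_zero]
  choose η hη using fun z => exists_toAddCircle_eq_of_nsmul_eq_zero (htorsion z)
  refine ⟨AddMonoidHom.mk' η fun x y => toAddCircle_injective _ (by simp only [map_add, hη]),
    .of_continuous_injective_comp (toAddCircle_injective _) (by simpa [comp_def, hη] using hψc),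
    ?_⟩
  ext z
  apply toAddCircle_injective d
  show toAddCircle (castHom (dvd_mul_left d n) (ZMod d) (η z)) = toAddCircle (ξ z)
  rw [toAddCircle_castHom_mul, hη, hnψ]

open ZMod in
theorem IsDivisible.exists_nsmul_eq_comp_castHom (hA : IsDivisible A) {n d : ℕ} (hn : 1 ≤ n)
    (ι : ZMod d →+ A) :
    ∃ ρ : ZMod (n * d) →+ A,
      n • ρ = ι.comp (castHom (dvd_mul_left d n) (ZMod d)).toAddMonoidHom := by
  obtain ⟨a, ha⟩ := hA (ι 1) n hn
  have hord : ((n * d : ℕ) : ℤ) • a = 0 := by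
    rw [natCast_zsmul, mul_nsmul, ha, ← map_nsmul, nsmul_eq_mul, mul_one, natCast_self,
      map_zero]
  refine ⟨lift (n * d) ⟨zmultiplesHom A a, hord⟩, AddMonoidHom.ext fun x => ?_⟩
  obtain ⟨j, rfl⟩ := intCast_surjective x
  simp only [AddMonoidHom.nsmul_apply, lift_coe, zmultiplesHom_apply, AddMonoidHom.comp_apply,
    RingHom.toAddMonoidHom_eq_coe, AddMonoidHom.coe_coe, map_intCast]
  rw [smul_comm, ha, ← map_zsmul, zsmul_one]

theorem HasDivisibleDual.exists_nsmul_eq_comp_zmod (hZ : HasDivisibleDual Z)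
    (hA : IsDivisible A) {n d : ℕ} (hn : 1 ≤ n) [NeZero d] (ξ : Z →+ ZMod d)
    (hξ : IsLocallyConstant ξ) (ι : ZMod d →+ A) :
    ∃ χ ∈ locallyConstantAddHoms Z A, n • χ = ι.comp ξ := by
  have : NeZero n := ⟨by omega⟩
  obtain ⟨η, hη, hηξ⟩ := hZ.exists_lift_zmod (n := n) ξ hξ
  obtain ⟨ρ, hρ⟩ := hA.exists_nsmul_eq_comp_castHom hn ι
  refine ⟨ρ.comp η, hη.comp ρ, ?_⟩
  rw [← AddMonoidHom.smul_comp, hρ, AddMonoidHom.comp_assoc, hηξ]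

theorem HasDivisibleDual.exists_nsmul_eq_comp_of_finite (hZ : HasDivisibleDual Z)
    (hA : IsDivisible A) {n : ℕ} (hn : 1 ≤ n) {F : Type*} [AddCommGroup F] [Finite F]
    (ξ : Z →+ F) (hξ : IsLocallyConstant ξ) (ι : F →+ A) :
    ∃ χ ∈ locallyConstantAddHoms Z A, n • χ = ι.comp ξ := by
  classical
  obtain ⟨I, _, d, hd, ⟨e⟩⟩ := AddCommGroup.equiv_directSum_zmod_of_finite' F
  have (i : I) : NeZero (d i) := ⟨by linarith [hd i]⟩
  choose χ hχ hnχ using fun i => hZ.exists_nsmul_eq_comp_zmod hA hn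
    ((DFinsupp.evalAddMonoidHom (β := fun i => ZMod (d i)) i).comp (e.toAddMonoidHom.comp ξ))
    (hξ.comp fun x => e x i)
    (ι.comp (e.symm.toAddMonoidHom.comp (DirectSum.of (fun i => ZMod (d i)) i)))
  refine ⟨∑ i, χ i, sum_mem fun i _ => hχ i, ?_⟩
  ext z
  simp only [Finset.smul_sum, hnχ, AddMonoidHom.finsetSum_apply, AddMonoidHom.comp_apply]
  rw [← map_sum, ← map_sum]
  exact congrArg ι <|
    (congrArg e.symm (DirectSum.sum_univ_of (e (ξ z)))).trans (e.symm_apply_apply _)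

theorem isDivisible_locallyConstantAddHoms [CompactSpace Z] (hZ : HasDivisibleDual Z)
    (hA : IsDivisible A) : IsDivisible (locallyConstantAddHoms Z A) := by
  rintro ⟨χ, hχ⟩ n hn
  have : Finite χ.range := by
    rw [← SetLike.coe_sort_coe, AddMonoidHom.coe_range]
    exact hχ.range_finite.to_subtype
  obtain ⟨χ', hχ', hnχ'⟩ := hZ.exists_nsmul_eq_comp_of_finite hA hn χ.rangeRestrict
    (.desc _ Subtype.val hχ Subtype.val_injective) χ.range.subtype
  exact ⟨⟨χ', hχ'⟩, Subtype.ext (hnχ'.trans χ.subtype_comp_rangeRestrict)⟩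

end Characters

universe u

section Multilinear

variable {Z A : Type u} [AddCommGroup Z] [TopologicalSpace Z] [AddCommGroup A] {k : ℕ}

def curryLast (b : (Fin (k + 1) → Z) → A) (hb : IsMultilinear b) (hbc : IsLocallyConstant b)
    (g : Fin k → Z) : locallyConstantAddHoms Z A :=
  ⟨AddMonoidHom.mk' (fun z => b (Fin.snoc g z)) fun x y => by
      simpa only [Fin.update_snoc_last] using hb (Fin.last k) (Fin.snoc g x) x y,
    hbc.comp_continuous (continuous_const.finSnoc continuous_id)⟩

theorem curryLast_apply (b : (Fin (k + 1) → Z) → A) (hb : IsMultilinear b)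
    (hbc : IsLocallyConstant b) (g : Fin k → Z) (z : Z) :
    (curryLast b hb hbc g : Z →+ A) z = b (Fin.snoc g z) :=
  rfl

theorem isMultilinear_curryLast {b : (Fin (k + 1) → Z) → A} (hb : IsMultilinear b)
    (hbc : IsLocallyConstant b) : IsMultilinear (curryLast b hb hbc) := by
  intro i g x y
  ext z
  simp only [AddSubgroup.coe_add, AddMonoidHom.add_apply, curryLast_apply, Fin.snoc_update]
  exact hb i.castSucc (Fin.snoc g z) x y

theorem isLocallyConstant_curryLast [CompactSpace Z] {b : (Fin (k + 1) → Z) → A}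
    (hb : IsMultilinear b) (hbc : IsLocallyConstant b) :
    IsLocallyConstant (curryLast b hb hbc) :=
  .desc _ (fun χ : locallyConstantAddHoms Z A => ⇑(χ : Z →+ A))
    (hbc.comp_continuous (continuous_fst.finSnoc continuous_snd)).curry_of_compactSpace
    fun _ _ h => Subtype.ext (DFunLike.coe_injective h)

def uncurryLast (B : (Fin k → Z) → locallyConstantAddHoms Z A) (g : Fin (k + 1) → Z) : A :=
  (B (Fin.init g) : Z →+ A) (g (Fin.last k))

theorem isMultilinear_uncurryLast {B : (Fin k → Z) → locallyConstantAddHoms Z A}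
    (hB : IsMultilinear B) : IsMultilinear (uncurryLast B) := by
  intro i g x y
  induction i using Fin.lastCases with
  | last => simp [uncurryLast, Fin.init_update_last]
  | cast j =>
    simp [uncurryLast, Fin.init_update_castSucc, hB j (Fin.init g) x y,
      update_of_ne (Fin.castSucc_lt_last j).ne']

theorem isLocallyConstant_uncurryLast {B : (Fin k → Z) → locallyConstantAddHoms Z A}
    (hB : IsLocallyConstant B) : IsLocallyConstant (uncurryLast B) := by
  have h1 := (hB.comp fun χ => ⇑(χ : Z →+ A)).uncurry fun g => (B g).2
  have h2 : Continuous fun g : Fin (k + 1) → Z => (Fin.init g, g (Fin.last k)) :=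
    continuous_id.finInit.prodMk (continuous_apply _)
  exact h1.comp_continuous h2

theorem uncurryLast_nsmul (B : (Fin k → Z) → locallyConstantAddHoms Z A) (n : ℕ) :
    uncurryLast (n • B) = n • uncurryLast B :=
  rfl

theorem uncurryLast_curryLast {b : (Fin (k + 1) → Z) → A} (hb : IsMultilinear b)
    (hbc : IsLocallyConstant b) : uncurryLast (curryLast b hb hbc) = b :=
  funext fun g => by rw [uncurryLast, curryLast_apply, Fin.snoc_init_self]

theorem IsMultilinear.exists_nsmul_eq [CompactSpace Z] (hZ : HasDivisibleDual Z)
    (hA : IsDivisible A) {b : (Fin k → Z) → A} (hb : IsMultilinear b)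
    (hbc : IsLocallyConstant b) {n : ℕ} (hn : 1 ≤ n) :
    ∃ b', IsLocallyConstant b' ∧ IsMultilinear b' ∧ n • b' = b := by
  induction k generalizing A with
  | zero =>
    obtain ⟨a, ha⟩ := hA (b finZeroElim) n hn
    exact ⟨fun _ => a, .const a, finZeroElim, funext fun g => by
      rw [Pi.smul_apply, ha, Subsingleton.elim g finZeroElim]⟩
  | succ k ih =>
    obtain ⟨B, hBc, hB, hnB⟩ := ih (isDivisible_locallyConstantAddHoms hZ hA)
      (isMultilinear_curryLast hb hbc) (isLocallyConstant_curryLast hb hbc)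
    exact ⟨uncurryLast B, isLocallyConstant_uncurryLast hBc, isMultilinear_uncurryLast hB,
      by rw [← uncurryLast_nsmul, hnB, uncurryLast_curryLast]⟩

end Multilinear

theorem continuous_multilinear_countable_divisible_general
    (Z : Type) [AddCommGroup Z] [TopologicalSpace Z]
    [CompactSpace Z] [TopologicalSpace.MetrizableSpace Z]
    (hdual : ∀ χ : Z →+ AddCircle (1 : ℝ), Continuous χ → ∀ n : ℕ, 1 ≤ n →
      ∃ χ' : Z →+ AddCircle (1 : ℝ), Continuous χ' ∧ n • χ' = χ)
    (A : Type) [AddCommGroup A] [Countable A] [TopologicalSpace A] [DiscreteTopology A]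
    (hA : ∀ (a : A) (n : ℕ), 1 ≤ n → ∃ a' : A, n • a' = a)
    (k : ℕ) :
    Countable {b : (Fin k → Z) → A // Continuous b ∧ IsMultilinear b} ∧
      ∀ b : (Fin k → Z) → A, Continuous b → IsMultilinear b →
        ∀ n : ℕ, 1 ≤ n →
          ∃ b' : (Fin k → Z) → A, Continuous b' ∧ IsMultilinear b' ∧ n • b' = b := by
  refine ⟨?_, fun b hbc hb n hn => ?_⟩
  · have := ContinuousMap.countable_of_compactSpace (X := Fin k → Z) (Y := A)
    exact Injective.countable (f := fun b => (⟨b.1, b.2.1⟩ : C(Fin k → Z, A)))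
      fun b b' h => Subtype.ext (congrArg DFunLike.coe h)
  · simp only [← IsLocallyConstant.iff_continuous] at hbc ⊢
    exact hb.exists_nsmul_eq hdual hA hbc hn

/-- Let `Z` be a compact metrizable abelian topological group whose Pontryagin dual is
divisible, let `A` be a countable discrete divisible abelian group, and let `k ≥ 1`.
Then the group `ML_k(Z,A)` of continuous multilinear maps `Z^k → A` is countable and
divisible. -/
theorem continuous_multilinear_countable_divisible
    (Z : Type) [AddCommGroup Z] [TopologicalSpace Z] [IsTopologicalAddGroup Z]
    [CompactSpace Z] [TopologicalSpace.MetrizableSpace Z]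
    (hdual : ∀ χ : Z →+ AddCircle (1 : ℝ), Continuous χ → ∀ n : ℕ, 1 ≤ n →
      ∃ χ' : Z →+ AddCircle (1 : ℝ), Continuous χ' ∧ n • χ' = χ)
    (A : Type) [AddCommGroup A] [Countable A] [TopologicalSpace A] [DiscreteTopology A]
    (hA : ∀ (a : A) (n : ℕ), 1 ≤ n → ∃ a' : A, n • a' = a)
    (k : ℕ) (hk : 1 ≤ k) :
    Countable {b : (Fin k → Z) → A // Continuous b ∧ IsMultilinear b} ∧
      ∀ b : (Fin k → Z) → A, Continuous b → IsMultilinear b →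
        ∀ n : ℕ, 1 ≤ n →
          ∃ b' : (Fin k → Z) → A, Continuous b' ∧ IsMultilinear b' ∧ n • b' = b :=
  continuous_multilinear_countable_divisible_general Z hdual A hA k
end

section
/- Let Z be a compact metrizable abelian topological group whose Pontryagin dual is divisible, and let A be either a countable discrete divisible abelian group or the circle group ℝ/ℤ. Then for every k ≥ 1 the abelian group SML_k(Z,A) of continuous symmetric multilinear maps from Z^k to A is divisible. -/
/-- `b : Z^k → A` is symmetric if it is invariant under all permutations of its arguments. -/
def IsSymmetric {Z A : Type*} {k : ℕ} (b : (Fin k → Z) → A) : Prop :=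
  ∀ (σ : Equiv.Perm (Fin k)) (g : Fin k → Z), b (g ∘ σ) = b g

/-!
A continuous multilinear `b` with values in a discrete group, or in the circle when `k ≥ 2`,
vanishes as soon as one argument lies in a suitable open subgroup `W` of `Z`: this comes from
compactness of `Z`, and for the circle from the absence of small subgroups, applied to the
multiples of `b` in a second argument. Writing the finite group `Z ⧸ W` as `⨁ ZMod mᵢ` with
coordinates `φᵢ` and lifts `eᵢ` of the generators, `b g = ∑_I (∏_j φ_{I j}(g_j)) • c_I` where
`c_I = b (e ∘ I)` is symmetric and killed by every `m_{I j}`. Divisibility of the dual lifts each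
`φᵢ` to a continuous `φ'ᵢ : Z → ZMod (n mᵢ)` with `φ'ᵢ ≡ φᵢ mod mᵢ`; dividing the `c_I` by `n`
symmetrically, the same formula built from the `φ'ᵢ` and the `c_I / n` is the required `b'`.
For `k = 1` and the circle, `b` is a character and the dual's divisibility applies directly.
-/

open Function Filter Topology

namespace IsMultilinear

variable {Z A : Type*} [AddCommGroup Z] [AddCommGroup A] {k : ℕ} {b : (Fin k → Z) → A}

def slice (hb : IsMultilinear b) (g : Fin k → Z) (i : Fin k) : Z →+ A :=
  AddMonoidHom.mk' (fun x => b (update g i x)) (hb i g)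

theorem apply_update_nsmul (hb : IsMultilinear b) (g : Fin k → Z) (i : Fin k) (r : ℕ) (x : Z) :
    b (update g i (r • x)) = r • b (update g i x) :=
  (hb.slice g i).map_nsmul r x

theorem apply_update_zero (hb : IsMultilinear b) (g : Fin k → Z) (i : Fin k) :
    b (update g i 0) = 0 :=
  (hb.slice g i).map_zero

def toMultilinearMap (hb : IsMultilinear b) : MultilinearMap ℕ (fun _ : Fin k => Z) A where
  toFun := b
  map_update_add' g i x y := by convert hb i g x y
  map_update_smul' g i r x := by convert hb.apply_update_nsmul g i r x

theorem addMonoidHom_comp {B : Type*} [AddCommGroup B] (hb : IsMultilinear b) (f : A →+ B) :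
    IsMultilinear (f ∘ b) := fun i g x y => by
  simp only [comp_apply, hb i g x y, map_add]

def radical (hb : IsMultilinear b) : AddSubgroup Z :=
  ⨅ (i) (g), (hb.slice g i).ker

theorem mem_radical (hb : IsMultilinear b) {x : Z} :
    x ∈ hb.radical ↔ ∀ i g, b (update g i x) = 0 := by
  simp [radical, slice]

theorem apply_eq_zero_of_mem_radical (hb : IsMultilinear b) {g : Fin k → Z} {i : Fin k}
    (h : g i ∈ hb.radical) : b g = 0 := by
  simpa using hb.mem_radical.1 h i g

theorem apply_eq_apply_of_sub_mem_radical (hb : IsMultilinear b) {g h : Fin k → Z}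
    (hgh : ∀ i, g i - h i ∈ hb.radical) : b g = b h := by
  classical
  have hexpand := hb.toMultilinearMap.map_add_univ h (g - h)
  rw [add_sub_cancel] at hexpand
  rw [show b g = hb.toMultilinearMap g from rfl, hexpand, Finset.sum_eq_single Finset.univ]
  · simp [toMultilinearMap]
  · intro s _ hs
    obtain ⟨i, -, hi⟩ := Finset.exists_of_ssubset (Finset.ssubset_univ_iff.2 hs)
    exact hb.apply_eq_zero_of_mem_radical (i := i) (by simpa [hi] using hgh i)
  · simp

end IsMultilinear

theorem IsSymmetric.comp {Z A B : Type*} {k : ℕ} {b : (Fin k → Z) → A} (hb : IsSymmetric b)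
    (f : A → B) : IsSymmetric (f ∘ b) := fun σ g => congrArg f (hb σ g)

theorem exists_symmetric_nsmul_eq {A ι : Type*} [AddCommGroup A] {n k : ℕ}
    (hA : ∀ a : A, ∃ a', n • a' = a) (c : (Fin k → ι) → A)
    (hc : ∀ (σ : Equiv.Perm (Fin k)) I, c (I ∘ σ) = c I) :
    ∃ c' : (Fin k → ι) → A, (∀ (σ : Equiv.Perm (Fin k)) I, c' (I ∘ σ) = c' I) ∧
      ∀ I, n • c' I = c I := by
  let _ : LinearOrder ι := IsWellOrder.linearOrder WellOrderingRel
  choose d hd using fun I => hA (c I)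
  -- divide `c` at the sorted representative of each orbit of index tuples
  refine ⟨fun I => d (I ∘ Tuple.sort I), fun σ I => ?_, fun I => ?_⟩
  · simp only [Tuple.comp_perm_comp_sort_eq_comp_sort]
  · simp only [hd, hc]

section BasisExpansion

variable {Z A ι : Type*} [AddCommGroup Z] [AddCommGroup A] [Fintype ι] {k : ℕ} {N : ι → ℕ}

def basisExpansion (φ : ∀ i, Z →+ ZMod (N i)) (c : (Fin k → ι) → A) (g : Fin k → Z) : A :=
  ∑ I : Fin k → ι, (∏ j, (φ (I j) (g j)).val) • c I

theorem isMultilinear_basisExpansion [∀ i, NeZero (N i)] (φ : ∀ i, Z →+ ZMod (N i))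
    {c : (Fin k → ι) → A} (hc : ∀ I j, N (I j) • c I = 0) :
    IsMultilinear (basisExpansion φ c) := by
  intro i g x y
  simp only [basisExpansion, ← Finset.sum_add_distrib]
  refine Finset.sum_congr rfl fun I _ => ?_
  have hcoord : ∀ z, (fun j => (φ (I j) (update g i z j)).val)
      = update (fun j => (φ (I j) (g j)).val) i (φ (I i) z).val := fun z => by
    ext j
    rcases eq_or_ne j i with rfl | hji <;> simp [*]
  simp only [hcoord, Finset.prod_update_of_mem (Finset.mem_univ i), ← add_nsmul, ← add_mul]
  refine nsmul_eq_nsmul_of_modEq (Nat.ModEq.mul_right _ ?_) (hc I i)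
  rw [map_add, ZMod.val_add]
  exact Nat.mod_modEq _ _

theorem isSymmetric_basisExpansion (φ : ∀ i, Z →+ ZMod (N i)) {c : (Fin k → ι) → A}
    (hc : ∀ (σ : Equiv.Perm (Fin k)) I, c (I ∘ σ) = c I) :
    IsSymmetric (basisExpansion φ c) := by
  intro σ g
  -- `v` hides the dependent type `ZMod (N i)`, which would block rewriting the index
  let v : ι → Z → ℕ := fun i z => (φ i z).val
  change ∑ I, (∏ j, v (I j) (g (σ j))) • c I = ∑ I, (∏ j, v (I j) (g j)) • c I
  refine Fintype.sum_equiv (σ.arrowCongr (Equiv.refl ι)) _ _ fun I => ?_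
  rw [show σ.arrowCongr (Equiv.refl ι) I = I ∘ ⇑σ⁻¹ from rfl, hc σ⁻¹ I,
    ← Equiv.prod_comp σ fun j => v ((I ∘ ⇑σ⁻¹) j) (g j)]
  simp only [comp_apply, Equiv.Perm.coe_inv, Equiv.symm_apply_apply]

theorem continuous_basisExpansion [TopologicalSpace Z] [TopologicalSpace A]
    {φ : ∀ i, Z →+ ZMod (N i)} (hφ : ∀ i, Continuous (φ i)) (c : (Fin k → ι) → A) :
    Continuous (basisExpansion φ c) := by
  have hcoords : Continuous fun g : Fin k → Z => fun j i => φ i (g j) := by fun_prop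
  exact (continuous_of_discreteTopology (f := fun x : Fin k → ∀ i, ZMod (N i) =>
    ∑ I : Fin k → ι, (∏ j, (x j (I j)).val) • c I)).comp hcoords

theorem basisExpansion_congr {M N' : ι → ℕ} (φ : ∀ i, Z →+ ZMod (N i))
    (φ' : ∀ i, Z →+ ZMod (N' i)) (h : ∀ i z, (φ i z).val ≡ (φ' i z).val [MOD M i])
    {c : (Fin k → ι) → A} (hc : ∀ I j, M (I j) • c I = 0) :
    basisExpansion φ c = basisExpansion φ' c := by
  ext g
  refine Finset.sum_congr rfl fun I _ =>
    nsmul_eq_nsmul_of_modEq ?_ (addOrderOf_nsmul_eq_zero (c I))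
  exact Nat.ModEq.prod fun j _ =>
    (h (I j) (g j)).of_dvd (addOrderOf_dvd_of_nsmul_eq_zero (hc I j))

theorem nsmul_basisExpansion (φ : ∀ i, Z →+ ZMod (N i)) (c : (Fin k → ι) → A) (n : ℕ) :
    n • basisExpansion φ c = basisExpansion φ (n • c) := by
  ext g
  simp [basisExpansion, Finset.smul_sum, smul_comm n]

theorem IsMultilinear.eq_basisExpansion {b : (Fin k → Z) → A} (hb : IsMultilinear b)
    (φ : ∀ i, Z →+ ZMod (N i)) (e : ι → Z)
    (he : ∀ x, x - ∑ i, (φ i x).val • e i ∈ hb.radical) :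
    b = basisExpansion φ (fun I => b (e ∘ I)) := by
  classical
  ext g
  rw [hb.apply_eq_apply_of_sub_mem_radical (h := fun j => ∑ i, (φ i (g j)).val • e i)
    fun j => he (g j)]
  change hb.toMultilinearMap (fun j => ∑ i, (φ i (g j)).val • e i) = _
  simp only [MultilinearMap.map_sum, MultilinearMap.map_smul_univ]
  rfl

end BasisExpansion

theorem AddCircle.eq_zero_of_forall_norm_nsmul_lt {x : UnitAddCircle}
    (hx : ∀ r : ℕ, ‖r • x‖ < 4⁻¹) : x = 0 := by
  obtain ⟨s, rfl⟩ := QuotientAddGroup.mk_surjective x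
  set t := s - round s
  have hts : (t : UnitAddCircle) = s := by simp [t]
  have hnorm {u : ℝ} (hu : |u| ≤ 2⁻¹) : ‖(u : UnitAddCircle)‖ = |u| :=
    (AddCircle.norm_coe_eq_abs_iff (p := (1 : ℝ)) one_ne_zero).2 (by simpa using hu)
  have hsmall : ∀ j : ℕ, 2 ^ j * |t| < 4⁻¹ := by
    intro j
    induction j with
    | zero => simpa [← hts, hnorm (u := t) (by simpa [t] using abs_sub_round s)] using hx 1
    | succ j ih =>
      have hle : |2 ^ (j + 1) * t| ≤ 2⁻¹ := by
        rw [abs_mul, abs_pow, abs_two, pow_succ]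
        linarith
      simpa [← hts, ← AddCircle.coe_nsmul, hnorm hle, abs_mul] using hx (2 ^ (j + 1))
  have ht : t = 0 := by
    by_contra ht
    obtain ⟨j, hj⟩ := pow_unbounded_of_one_lt (4⁻¹ / |t|) one_lt_two
    rw [div_lt_iff₀ (abs_pos.2 ht)] at hj
    exact (hsmall j).not_gt hj
  rw [← hts, ht, QuotientAddGroup.mk_zero]

namespace IsMultilinear

variable {Z A : Type*} [AddCommGroup Z] [TopologicalSpace Z] [AddCommGroup A] {k : ℕ}
  {b : (Fin k → Z) → A}

theorem eventually_forall_apply_update_mem [TopologicalSpace A] [CompactSpace Z]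
    (hb : IsMultilinear b) (hbc : Continuous b) (i : Fin k) {V : Set A} (hV : V ∈ 𝓝 0) :
    ∀ᶠ x in 𝓝 (0 : Z), ∀ g, b (update g i x) ∈ V := by
  have hcont : Continuous fun p : Z × (Fin k → Z) => b (update p.2 i p.1) :=
    hbc.comp (continuous_snd.update i continuous_fst)
  simpa using isCompact_univ.eventually_forall_of_forall_eventually (x₀ := 0)
    (P := fun x g => b (update g i x) ∈ V)
    fun g _ => hcont.continuousAt.preimage_mem_nhds (by simpa [hb.apply_update_zero] using hV)

theorem isOpen_radical_of_eventually [IsTopologicalAddGroup Z] (hb : IsMultilinear b)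
    (h : ∀ i, ∀ᶠ x in 𝓝 (0 : Z), ∀ g, b (update g i x) = 0) : IsOpen (hb.radical : Set Z) :=
  AddSubgroup.isOpen_of_mem_nhds _ (g := 0) <| by
    filter_upwards [eventually_all.2 h] with x hx using hb.mem_radical.2 hx

theorem isOpen_radical_of_discreteTopology [TopologicalSpace A] [DiscreteTopology A]
    [IsTopologicalAddGroup Z] [CompactSpace Z] (hb : IsMultilinear b) (hbc : Continuous b) :
    IsOpen (hb.radical : Set Z) :=
  hb.isOpen_radical_of_eventually fun i =>
    hb.eventually_forall_apply_update_mem hbc i (isOpen_discrete {0} |>.mem_nhds rfl)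

theorem isOpen_radical_of_addCircle [IsTopologicalAddGroup Z] [CompactSpace Z] (hk : 2 ≤ k)
    {b : (Fin k → Z) → UnitAddCircle} (hb : IsMultilinear b) (hbc : Continuous b) :
    IsOpen (hb.radical : Set Z) := by
  refine hb.isOpen_radical_of_eventually fun i => ?_
  have : Nontrivial (Fin k) := Fin.nontrivial_iff_two_le.2 hk
  obtain ⟨j, hji⟩ := exists_ne i
  filter_upwards [hb.eventually_forall_apply_update_mem hbc i
    (Metric.ball_mem_nhds 0 (by norm_num : (0 : ℝ) < 4⁻¹))] with x hx g
  refine AddCircle.eq_zero_of_forall_norm_nsmul_lt fun r => ?_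
  have hr : r • b (update g i x) = b (update (update g j (r • g j)) i x) := by
    rw [update_comm hji, hb.apply_update_nsmul, ← update_of_ne hji x g, update_eq_self]
  simpa [hr] using hx (update g j (r • g j))

end IsMultilinear

theorem AddSubgroup.exists_zmod_coordinates_of_isOpen {Z : Type*} [AddCommGroup Z]
    [TopologicalSpace Z] [IsTopologicalAddGroup Z] [CompactSpace Z] (W : AddSubgroup Z)
    (hW : IsOpen (W : Set Z)) :
    ∃ (ι : Type) (_ : Fintype ι) (m : ι → ℕ) (_ : ∀ i, NeZero (m i))
      (φ : ∀ i, Z →+ ZMod (m i)) (e : ι → Z),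
      (∀ i, Continuous (φ i)) ∧ (∀ i, m i • e i ∈ W) ∧ ∀ x, x - ∑ i, (φ i x).val • e i ∈ W := by
  classical
  have := W.quotient_finite_of_isOpen hW
  have := QuotientAddGroup.discreteTopology hW
  obtain ⟨ι, _, m, hm, ⟨ψ⟩⟩ := AddCommGroup.equiv_directSum_zmod_of_finite' (Z ⧸ W)
  have : ∀ i, NeZero (m i) := fun i => ⟨by have := hm i; omega⟩
  let ψ' : Z ⧸ W ≃+ ∀ i, ZMod (m i) := ψ.trans (DirectSum.addEquivProd _)
  let π : Z →+ ∀ i, ZMod (m i) := ψ'.toAddMonoidHom.comp (QuotientAddGroup.mk' W)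
  have hπ : ∀ x, π x = 0 ↔ x ∈ W := fun x => by simp [π]
  have hπ_surj : Surjective π := fun y => by
    obtain ⟨q, rfl⟩ := ψ'.surjective y
    obtain ⟨x, rfl⟩ := QuotientAddGroup.mk_surjective q
    exact ⟨x, rfl⟩
  choose e he using fun i => hπ_surj (Pi.single i 1)
  refine ⟨ι, inferInstance, m, inferInstance, fun i => (Pi.evalAddMonoidHom _ i).comp π, e,
    fun i => (continuous_of_discreteTopology (f := fun q => ψ' q i)).comp continuous_quot_mk,
    fun i => ?_, fun x => ?_⟩
  · rw [← hπ, map_nsmul, he, ← Pi.single_smul]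
    simp
  · rw [← hπ, map_sub, map_sum]
    simp [he, ← Pi.single_smul, Finset.univ_sum_single]

theorem ZMod.exists_toAddCircle_eq_of_nsmul_eq_zero_s9 {N : ℕ} [NeZero N] {x : UnitAddCircle}
    (hx : N • x = 0) : ∃ j : ZMod N, toAddCircle j = x := by
  obtain ⟨r, -, rfl⟩ := (AddCircle.nsmul_eq_zero_iff (NeZero.pos N)).1 hx
  exact ⟨r, by simp [toAddCircle_natCast]⟩

theorem ZMod.nsmul_toAddCircle_eq_toAddCircle_val {n m : ℕ} [NeZero n] [NeZero m]
    (x : ZMod (n * m)) : n • toAddCircle x = toAddCircle (x.val : ZMod m) := by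
  rw [toAddCircle_apply, toAddCircle_natCast, ← AddCircle.coe_nsmul, nsmul_eq_mul]
  congr 1
  have : (n : ℝ) ≠ 0 := NeZero.ne _
  push_cast
  field_simp

theorem exists_zmod_lift_of_dual_divisible {Z : Type*} [AddCommGroup Z] [TopologicalSpace Z]
    {n : ℕ} [NeZero n]
    (hdual : ∀ χ : Z →+ UnitAddCircle, Continuous χ → ∃ χ' : Z →+ UnitAddCircle,
      Continuous χ' ∧ n • χ' = χ)
    {m : ℕ} [NeZero m] (φ : Z →+ ZMod m) (hφ : Continuous φ) :
    ∃ φ' : Z →+ ZMod (n * m), Continuous φ' ∧ ∀ z, ((φ' z).val : ZMod m) = φ z := by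
  obtain ⟨χ', hχ', hnχ'⟩ := hdual (ZMod.toAddCircle.comp φ)
    ((continuous_of_discreteTopology (f := ZMod.toAddCircle)).comp hφ)
  have hrange : ∀ z, χ' z ∈ (ZMod.toAddCircle : ZMod (n * m) →+ _).range := fun z =>
    ZMod.exists_toAddCircle_eq_of_nsmul_eq_zero_s9 <| by
      rw [mul_nsmul, ← AddMonoidHom.nsmul_apply χ', hnχ']
      simp [← map_nsmul]
  let φ' : Z →+ ZMod (n * m) :=
    (AddMonoidHom.ofInjective (ZMod.toAddCircle_injective _)).symm.toAddMonoidHom.comp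
      (χ'.codRestrict _ hrange)
  have hφ' : ∀ z, ZMod.toAddCircle (φ' z) = χ' z := fun z =>
    AddMonoidHom.apply_ofInjective_symm (ZMod.toAddCircle_injective _) ⟨χ' z, hrange z⟩
  have hemb : IsEmbedding (ZMod.toAddCircle : ZMod (n * m) → UnitAddCircle) :=
    (continuous_of_discreteTopology.isClosedEmbedding (ZMod.toAddCircle_injective _)).isEmbedding
  refine ⟨φ', hemb.continuous_iff.2 (by simpa [comp_def, hφ'] using hχ'), fun z => ?_⟩
  apply ZMod.toAddCircle_injective
  rw [← ZMod.nsmul_toAddCircle_eq_toAddCircle_val, hφ', ← AddMonoidHom.nsmul_apply, hnχ']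
  rfl

theorem IsMultilinear.exists_nsmul_eq_of_isOpen_radical {Z A : Type*} [AddCommGroup Z]
    [TopologicalSpace Z] [IsTopologicalAddGroup Z] [CompactSpace Z] [AddCommGroup A]
    [TopologicalSpace A] {n k : ℕ} [NeZero n]
    (hdual : ∀ χ : Z →+ UnitAddCircle, Continuous χ → ∃ χ' : Z →+ UnitAddCircle,
      Continuous χ' ∧ n • χ' = χ)
    (hA : ∀ a : A, ∃ a', n • a' = a) {b : (Fin k → Z) → A} (hb : IsMultilinear b)
    (hsym : IsSymmetric b) (hopen : IsOpen (hb.radical : Set Z)) :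
    ∃ b' : (Fin k → Z) → A, Continuous b' ∧ IsMultilinear b' ∧ IsSymmetric b' ∧ n • b' = b := by
  obtain ⟨ι, _, m, _, φ, e, hφ, he, hcoord⟩ := hb.radical.exists_zmod_coordinates_of_isOpen hopen
  choose φ' hφ' hlift using fun i => exists_zmod_lift_of_dual_divisible hdual (φ i) (hφ i)
  have hval : ∀ i z, (φ' i z).val ≡ (φ i z).val [MOD m i] := fun i z =>
    (ZMod.natCast_eq_natCast_iff _ _ _).1 (by rw [hlift, ZMod.natCast_zmod_val])
  set c : (Fin k → ι) → A := fun I => b (e ∘ I)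
  have hc_sym : ∀ (σ : Equiv.Perm (Fin k)) I, c (I ∘ σ) = c I := fun σ I => hsym σ (e ∘ I)
  have hc_tors : ∀ I j, m (I j) • c I = 0 := fun I j => by
    have h := hb.apply_update_nsmul (e ∘ I) j (m (I j)) ((e ∘ I) j)
    rw [update_eq_self] at h
    rw [← h]
    exact hb.apply_eq_zero_of_mem_radical (i := j) (by simpa using he (I j))
  obtain ⟨c', hc'_sym, hc'⟩ := exists_symmetric_nsmul_eq hA c hc_sym
  have hc'_tors : ∀ I j, (n * m (I j)) • c' I = 0 := fun I j => by
    rw [mul_nsmul, hc', hc_tors]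
  refine ⟨basisExpansion φ' c', continuous_basisExpansion hφ' c',
    isMultilinear_basisExpansion φ' hc'_tors, isSymmetric_basisExpansion φ' hc'_sym, ?_⟩
  calc n • basisExpansion φ' c' = basisExpansion φ' c := by
        rw [nsmul_basisExpansion, show n • c' = c from funext hc']
    _ = basisExpansion φ c := basisExpansion_congr φ' φ hval hc_tors
    _ = b := (hb.eq_basisExpansion φ e hcoord).symm

theorem IsMultilinear.exists_nsmul_eq_of_fin_one {Z A : Type*} [AddCommGroup Z]
    [TopologicalSpace Z] [AddCommGroup A] [TopologicalSpace A] {n : ℕ}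
    (hdual : ∀ χ : Z →+ A, Continuous χ → ∃ χ' : Z →+ A, Continuous χ' ∧ n • χ' = χ)
    {b : (Fin 1 → Z) → A} (hb : IsMultilinear b) (hbc : Continuous b) :
    ∃ b' : (Fin 1 → Z) → A, Continuous b' ∧ IsMultilinear b' ∧ IsSymmetric b' ∧ n • b' = b := by
  have hupd : ∀ (g : Fin 1 → Z) i x, update g i x = fun _ => x := fun g i x =>
    funext fun j => by rw [Subsingleton.elim j i, update_self]
  obtain ⟨χ', hχ', hnχ'⟩ :=
    hdual (hb.slice 0 0) (hbc.comp (continuous_const.update 0 continuous_id))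
  refine ⟨fun g => χ' (g 0), hχ'.comp (continuous_apply 0), fun i g x y => by simp [hupd],
    fun σ g => by simp [Subsingleton.elim (σ 0) 0], ?_⟩
  ext g
  have hg : update (0 : Fin 1 → Z) 0 (g 0) = g := by
    rw [hupd]
    ext j
    rw [Subsingleton.elim j 0]
  simpa [slice, hg] using DFunLike.congr_fun hnχ' (g 0)

theorem continuous_sml_divisible_general
    (Z : Type) [AddCommGroup Z] [TopologicalSpace Z] [IsTopologicalAddGroup Z]
    [CompactSpace Z]
    (hdual : ∀ χ : Z →+ AddCircle (1 : ℝ), Continuous χ → ∀ n : ℕ, 1 ≤ n →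
      ∃ χ' : Z →+ AddCircle (1 : ℝ), Continuous χ' ∧ n • χ' = χ)
    (A : Type) [AddCommGroup A] [TopologicalSpace A]
    (hA : (Countable A ∧ DiscreteTopology A ∧
            ∀ (a : A) (n : ℕ), 1 ≤ n → ∃ a' : A, n • a' = a) ∨
          ∃ e : A ≃+ AddCircle (1 : ℝ), Continuous e ∧ Continuous e.symm)
    (k : ℕ) (hk : 1 ≤ k)
    (b : (Fin k → Z) → A) (hb : Continuous b) (hml : IsMultilinear b)
    (hsym : IsSymmetric b) (n : ℕ) (hn : 1 ≤ n) :
    ∃ b' : (Fin k → Z) → A,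
      Continuous b' ∧ IsMultilinear b' ∧ IsSymmetric b' ∧ n • b' = b := by
  have : NeZero n := ⟨by omega⟩
  have hdual_n := fun χ hχ => hdual χ hχ n hn
  rcases hA with ⟨-, _, hA⟩ | ⟨e, he, he'⟩
  · exact hml.exists_nsmul_eq_of_isOpen_radical hdual_n (fun a => hA a n hn) hsym
      (hml.isOpen_radical_of_discreteTopology hb)
  obtain ⟨b', hb'c, hb'ml, hb'sym, hnb'⟩ : ∃ b' : (Fin k → Z) → UnitAddCircle,
      Continuous b' ∧ IsMultilinear b' ∧ IsSymmetric b' ∧ n • b' = e ∘ b := by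
    have hml' := hml.addMonoidHom_comp e.toAddMonoidHom
    obtain rfl | hk2 : k = 1 ∨ 2 ≤ k := by omega
    · exact hml'.exists_nsmul_eq_of_fin_one hdual_n (he.comp hb)
    · have hdiv (a : UnitAddCircle) : ∃ a', n • a' = a :=
        ⟨DivisibleBy.div a (n : ℤ), by
          simpa using DivisibleBy.div_cancel a (Int.natCast_ne_zero.2 (NeZero.ne n))⟩
      exact hml'.exists_nsmul_eq_of_isOpen_radical hdual_n hdiv (hsym.comp e)
        (hml'.isOpen_radical_of_addCircle hk2 (he.comp hb))
  refine ⟨e.symm ∘ b', he'.comp hb'c, hb'ml.addMonoidHom_comp e.symm.toAddMonoidHom,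
    hb'sym.comp e.symm, ?_⟩
  ext g
  simpa [← map_nsmul] using congrArg e.symm (congrFun hnb' g)

/-- Let `Z` be a compact metrizable abelian topological group with divisible Pontryagin
dual, and let `A` be either a countable discrete divisible abelian group or the circle
group `ℝ/ℤ`.  Then for every `k ≥ 1` the group `SML_k(Z,A)` of continuous symmetric
multilinear maps `Z^k → A` is divisible. -/
theorem continuous_sml_divisible
    (Z : Type) [AddCommGroup Z] [TopologicalSpace Z] [IsTopologicalAddGroup Z]
    [CompactSpace Z] [TopologicalSpace.MetrizableSpace Z]
    (hdual : ∀ χ : Z →+ AddCircle (1 : ℝ), Continuous χ → ∀ n : ℕ, 1 ≤ n →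
      ∃ χ' : Z →+ AddCircle (1 : ℝ), Continuous χ' ∧ n • χ' = χ)
    (A : Type) [AddCommGroup A] [TopologicalSpace A] [IsTopologicalAddGroup A]
    (hA : (Countable A ∧ DiscreteTopology A ∧
            ∀ (a : A) (n : ℕ), 1 ≤ n → ∃ a' : A, n • a' = a) ∨
          ∃ e : A ≃+ AddCircle (1 : ℝ), Continuous e ∧ Continuous e.symm)
    (k : ℕ) (hk : 1 ≤ k)
    (b : (Fin k → Z) → A) (hb : Continuous b) (hml : IsMultilinear b)
    (hsym : IsSymmetric b) (n : ℕ) (hn : 1 ≤ n) :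
    ∃ b' : (Fin k → Z) → A,
      Continuous b' ∧ IsMultilinear b' ∧ IsSymmetric b' ∧ n • b' = b :=
  continuous_sml_divisible_general Z hdual A hA k hk b hb hml hsym n hn
end
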